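/- Let S be an ordered face structure and a, b faces of the same dimension with a <^∼ b. Then γ(a) ≤^+ γ(b). -/

import Mathlib

/-!  Ordered face structures, following M. Zawadowski,
"On ordered face structures and many-to-one computads".

We encode the graded set of faces as `F : ℕ → Type`, where `F (k+1)` is the set
of faces of dimension `k`, and `F 0` is an empty type playing the role of
`S₋₁`.  The codomain of a face of dimension `k+1` is a face of dimension `k`,
and its domain `δ` is a set of elements of `F (k+1) ⊕ F k`, where `Sum.inl x`
is a genuine face `x` and `Sum.inr u` stands for the empty face `1ᵤ` on `u`.
-/

structure PreOFS where
  F : ℕ → Type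
  γ : ∀ {k : ℕ}, F (k + 2) → F (k + 1)
  δ : ∀ {k : ℕ}, F (k + 2) → Set (F (k + 1) ⊕ F k)
  sim : ∀ {k : ℕ}, F (k + 1) → F (k + 1) → Prop

namespace PreOFS

variable (S : PreOFS)

/-- The genuine (non-empty) faces in the domain of `a`. -/
def realDom {k : ℕ} (a : S.F (k + 2)) : Set (S.F (k + 1)) :=
  {x | Sum.inl x ∈ S.δ a}

/-- `a` has empty domain (`δ(a) = 1ᵤ`). -/
def isEps {k : ℕ} (a : S.F (k + 2)) : Prop :=
  ∃ u, Sum.inr u ∈ S.δ a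

/-- `a` is a loop (`δ(a) = γ(a)` as sets). -/
def isLoop {k : ℕ} (a : S.F (k + 2)) : Prop :=
  S.δ a = {Sum.inl (S.γ a)}

/-- Codomain of a generalized face (`γ(1ᵤ) = u`). -/
def cod {k : ℕ} : S.F (k + 2) ⊕ S.F (k + 1) → S.F (k + 1)
  | Sum.inl x => S.γ x
  | Sum.inr u => u

/-- Domain of a generalized face (`δ(1ᵤ) = u`). -/
def domM {k : ℕ} : S.F (k + 2) ⊕ S.F (k + 1) → Set (S.F (k + 1) ⊕ S.F k)
  | Sum.inl x => S.δ x
  | Sum.inr u => {Sum.inl u}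

/-- `δ̇⁻ᵞ(a)`: the non-loop genuine faces in the domain of `a`. -/
def nlDom {k : ℕ} (a : S.F (k + 3)) : Set (S.F (k + 2)) :=
  {x | Sum.inl x ∈ S.δ a ∧ ¬ S.isLoop x}

/-- The strict upper order `<⁺`. -/
def ltP {k : ℕ} : S.F (k + 1) → S.F (k + 1) → Prop :=
  Relation.TransGen
    (fun a b => ∃ α : S.F (k + 2), ¬ S.isLoop α ∧ Sum.inl a ∈ S.δ α ∧ S.γ α = b)

def leP {k : ℕ} (a b : S.F (k + 1)) : Prop := a = b ∨ S.ltP a b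

/-- Comparability under `<⁺`. -/
def perpP {k : ℕ} (a b : S.F (k + 1)) : Prop := S.ltP a b ∨ S.ltP b a

/-- Comparability under `<∼`. -/
def perpS {k : ℕ} (a b : S.F (k + 1)) : Prop := S.sim a b ∨ S.sim b a

/-- The lower relation `<⁻`. -/
def ltM {k : ℕ} : S.F (k + 2) → S.F (k + 2) → Prop :=
  Relation.TransGen (fun a b => Sum.inl (S.γ a) ∈ S.δ b)

/-- `θ(a) = δ(a) ∪ γ(a)` (with empty faces). -/
def thetaFull {k : ℕ} (a : S.F (k + 2)) : Set (S.F (k + 1) ⊕ S.F k) :=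
  insert (Sum.inl (S.γ a)) (S.δ a)

/-- `θ̇(a)`: the genuine faces in `δ(a) ∪ γ(a)`. -/
def thetaDot {k : ℕ} (a : S.F (k + 2)) : Set (S.F (k + 1)) :=
  insert (S.γ a) (S.realDom a)

/-- `ι(b)`: the internal faces of `b`. -/
def iota {k : ℕ} (b : S.F (k + 3)) : Set (S.F (k + 1)) :=
  {u | ∃ x ∈ S.nlDom b, ∃ y ∈ S.nlDom b, S.γ x = u ∧ u ∈ S.realDom y}

/-- `A ≡₁ B` : equality of sets of generalized faces modulo empty faces. -/
def eq1 {k : ℕ} (A B : Set (S.F (k + 2) ⊕ S.F (k + 1))) : Prop :=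
  {x : S.F (k + 2) | Sum.inl x ∈ A} = {x : S.F (k + 2) | Sum.inl x ∈ B} ∧
    ({u : S.F (k + 1) | Sum.inr u ∈ A} ∪
        ⋃ x ∈ {x : S.F (k + 2) | Sum.inl x ∈ A}, S.thetaDot x) =
      ({u : S.F (k + 1) | Sum.inr u ∈ B} ∪
        ⋃ x ∈ {x : S.F (k + 2) | Sum.inl x ∈ B}, S.thetaDot x)

end PreOFS

namespace PreOFS

/-- Iterated codomain, going down `j` dimensions. -/
def down (S : PreOFS) : ∀ (k j : ℕ), S.F (k + j + 1) → S.F (k + 1)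
  | _, 0, a => a
  | k, j + 1, a => down S k j (S.γ a)

/-- `γ⁽ˡ⁾` : iterated codomain down to dimension `l`. -/
def gIter (S : PreOFS) {k : ℕ} (l : ℕ) (h : l ≤ k) (a : S.F (k + 1)) : S.F (l + 1) :=
  down S l (k - l) (_root_.cast (congrArg S.F (by omega : k + 1 = l + (k - l) + 1)) a)

/-- The combined order `<^S`. -/
def ltS (S : PreOFS) {k : ℕ} (a b : S.F (k + 1)) : Prop :=
  S.ltP a b ∨ ∃ l : ℕ, ∃ h : l ≤ k, S.sim (S.gIter l h a) (S.gIter l h b)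

end PreOFS

/-- The axioms of an ordered face structure. -/
structure IsOFS (S : PreOFS) : Prop where
  empty_bot : IsEmpty (S.F 0)
  fin : ∀ k, Finite (S.F k)
  bdd : ∃ n, ∀ k, n < k → IsEmpty (S.F k)
  nonempty₀ : Nonempty (S.F 1)
  dom_nonempty : ∀ {k : ℕ} (a : S.F (k + 2)), (S.δ a).Nonempty
  dom_eps : ∀ {k : ℕ} (a : S.F (k + 2)) (u : S.F k),
    Sum.inr u ∈ S.δ a → S.δ a = {Sum.inr u}
  dom_dim1 : ∀ a : S.F 2, ∃ x, S.δ a = {Sum.inl x}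
  glob_γ : ∀ {k : ℕ} (a : S.F (k + 3)),
    ({S.γ (S.γ a)} : Set (S.F (k + 1))) =
      {y | ∃ e ∈ S.δ a, S.cod e = y} \ (⋃ x ∈ S.nlDom a, S.realDom x)
  glob_δ_low : ∀ a : S.F 3,
    S.realDom (S.γ a) =
      (⋃ e ∈ S.δ a, {x : S.F 1 | Sum.inl x ∈ S.domM e}) \
        {y : S.F 1 | ∃ x ∈ S.nlDom a, S.γ x = y}
  glob_δ : ∀ {k : ℕ} (a : S.F (k + 4)),
    S.eq1 (S.δ (S.γ a))
      ((⋃ e ∈ S.δ a, S.domM e) \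
        {e : S.F (k + 2) ⊕ S.F (k + 1) | ∃ x ∈ S.nlDom a, Sum.inl (S.γ x) = e})
  local_disc : ∀ {k : ℕ} (a : S.F (k + 2)) (x y : S.F (k + 1)),
    Sum.inl x ∈ S.δ a → Sum.inl y ∈ S.δ a → ¬ S.ltP x y
  strictP : ∀ {k : ℕ} (x : S.F (k + 1)), ¬ S.ltP x x
  linearP₀ : ∀ x y : S.F 1, x = y ∨ S.ltP x y ∨ S.ltP y x
  sim_irrefl : ∀ {k : ℕ} (x : S.F (k + 1)), ¬ S.sim x x
  sim_trans : ∀ {k : ℕ} (x y z : S.F (k + 1)), S.sim x y → S.sim y z → S.sim x z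
  disj : ∀ {k : ℕ} (x y : S.F (k + 1)), S.perpS x y → ¬ S.perpP x y
  sim_lt_minus : ∀ {k : ℕ} (a b : S.F (k + 2)), S.sim a b → S.ltM a b
  sim_dim0 : ∀ x y : S.F 1, ¬ S.sim x y
  disj_theta : ∀ {k : ℕ} (a b : S.F (k + 2)),
    S.thetaFull a ∩ S.thetaFull b = ∅ → (S.sim a b ↔ S.ltM a b)
  pencil₁ : ∀ {k : ℕ} (a b : S.F (k + 2)), a ≠ b →
    (S.thetaDot a ∩ S.thetaDot b).Nonempty → S.perpS a b ∨ S.perpP a b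
  pencil₂ : ∀ {k : ℕ} (a b : S.F (k + 3)), S.isEps a →
    S.γ (S.γ a) ∈ S.iota b → S.sim a b ∨ S.ltP a b
  loop_fill : ∀ {k : ℕ} (x : S.F (k + 2)), S.isLoop x →
    ∃ α : S.F (k + 3), ¬ S.isLoop α ∧ S.γ α = x

/-! A lower step `γ(c) ∈ δ(d)` gives `γ(c) ≤⁺ γ(d)`: an equality when `d` is a loop, an upper
step through `d` otherwise. Chaining these steps along the lower path `a <⁻ b`, which the axiom
`<∼ ⊆ <⁻` provides, gives `γ(a) ≤⁺ γ(b)`. -/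

namespace PreOFS

variable (S : PreOFS) {k : ℕ}

theorem leP_trans {a b c : S.F (k + 1)} (hab : S.leP a b) (hbc : S.leP b c) : S.leP a c := by
  rcases hab with rfl | hab
  · exact hbc
  rcases hbc with rfl | hbc
  · exact Or.inr hab
  · exact Or.inr (Relation.TransGen.trans hab hbc)

theorem leP_γ_of_γ_mem_δ {c d : S.F (k + 2)} (hcd : Sum.inl (S.γ c) ∈ S.δ d) :
    S.leP (S.γ c) (S.γ d) := by
  by_cases hd : S.isLoop d
  · rw [isLoop] at hd
    rw [hd, Set.mem_singleton_iff, Sum.inl.injEq] at hcd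
    exact Or.inl hcd
  · exact Or.inr (Relation.TransGen.single ⟨d, hd, hcd, rfl⟩)

theorem leP_γ_of_ltM {a b : S.F (k + 2)} (hab : S.ltM a b) : S.leP (S.γ a) (S.γ b) := by
  induction hab with
  | single hab => exact S.leP_γ_of_γ_mem_δ hab
  | tail _ hcd ih => exact S.leP_trans ih (S.leP_γ_of_γ_mem_δ hcd)

end PreOFS

/-- if `a <∼ b` then `γ(a) ≤⁺ γ(b)`. -/
theorem stmt10 (S : PreOFS) (hS : IsOFS S) {k : ℕ} (a b : S.F (k + 2))
    (h : S.sim a b) : S.leP (S.γ a) (S.γ b) :=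
  S.leP_γ_of_ltM (hS.sim_lt_minus a b h)
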